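/- arXiv:2510.23490 — 4 statements merged into one kernel-verified Lean document; each statement's English description precedes it below -/
import Mathlib

section
/- Let D be a perfect structure. If s is a vertex of D with a →^w s, and w ≃_Π v for words w, v ∈ 𝔄*, then a →^v s. -/
/-!
A single rewriting step `x ++ lᵢ ++ y ↦ x ++ rᵢ ++ y` preserves the set of vertices reached from
`a`: split a path at the ends of the `lᵢ`-segment; the prefix `x` leads from `a` to its start, so
perfection lets that segment be replaced by an `rᵢ`-path between the same endpoints. Hence
reachability along a word is invariant under the equivalence generated by these steps.
-/

/-- The smallest equivalence relation on words over `α` generated by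
`w ++ lᵢ ++ v ≃ w ++ rᵢ ++ v` for pairs `(lᵢ, rᵢ) ∈ P`. -/
def ThueEq {α : Type} (P : List (List α × List α)) : List α → List α → Prop :=
  Relation.EqvGen (fun u v => ∃ x y p, p ∈ P ∧ u = x ++ p.1 ++ y ∧ v = x ++ p.2 ++ y)

/-- `LPath E w s t`: there is a path from `s` to `t` whose edges are labeled by the word `w`. -/
def LPath {α V : Type} (E : α → V → V → Prop) : List α → V → V → Prop
  | [] => fun s t => s = t
  | R :: w => fun s t => ∃ u, E R s u ∧ LPath E w u t

def IsPerfect {α V : Type} (E : α → V → V → Prop) (P : List (List α × List α)) (a : V) : Prop :=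
  ∀ w s t, LPath E w a s → ∀ p ∈ P, (LPath E p.1 s t ↔ LPath E p.2 s t)

section

variable {α V : Type} {E : α → V → V → Prop}

theorem LPath.append_iff {x y : List α} {s t : V} :
    LPath E (x ++ y) s t ↔ ∃ m, LPath E x s m ∧ LPath E y m t := by
  induction x generalizing s with
  | nil => exact ⟨fun h => ⟨s, rfl, h⟩, fun ⟨_, hs, h⟩ => hs ▸ h⟩
  | cons R x ih =>
    simp only [List.cons_append, LPath, ih]
    exact ⟨fun ⟨u, hu, m, hx, hy⟩ => ⟨m, ⟨u, hu, hx⟩, hy⟩,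
      fun ⟨m, ⟨u, hu, hx⟩, hy⟩ => ⟨u, hu, m, hx, hy⟩⟩

variable {P : List (List α × List α)} {a : V}

theorem IsPerfect.lpath_append_rule_iff (hperf : IsPerfect E P a) {p : List α × List α}
    (hp : p ∈ P) (x y : List α) (s : V) :
    LPath E (x ++ p.1 ++ y) a s ↔ LPath E (x ++ p.2 ++ y) a s := by
  simp only [LPath.append_iff]
  exact exists_congr fun n => and_congr_left' <|
    exists_congr fun m => and_congr_right fun hx => hperf x m n hx p hp

theorem IsPerfect.lpath_iff_of_thueEq (hperf : IsPerfect E P a) {w v : List α}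
    (hwv : ThueEq P w v) (s : V) : LPath E w a s ↔ LPath E v a s := by
  have hequiv : Equivalence fun u u' => (LPath E u a s ↔ LPath E u' a s) :=
    ⟨fun _ => Iff.rfl, Iff.symm, Iff.trans⟩
  refine hequiv.eqvGen_iff.mp (Relation.EqvGen.mono ?_ w v hwv)
  rintro _ _ ⟨x, y, p, hp, rfl, rfl⟩
  exact hperf.lpath_append_rule_iff hp x y s

end

theorem perfect_path_congr_general {α V : Type} (P : List (List α × List α))
    (E : α → V → V → Prop) (a : V)
    (hperf : ∀ w s t, LPath E w a s → ∀ p ∈ P, (LPath E p.1 s t ↔ LPath E p.2 s t))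
    (s : V) (w v : List α) (hw : LPath E w a s) (hwv : ThueEq P w v) :
    LPath E v a s :=
  ((show IsPerfect E P a from hperf).lpath_iff_of_thueEq hwv s).mp hw

theorem perfect_path_congr {α V : Type} [Fintype α] (P : List (List α × List α))
    (E : α → V → V → Prop) (Ap : V → Prop) (a : V)
    (p1 : Ap a)
    (p2 : ∀ s, Ap s → ∀ S, ∃ t, E S s t)
    (p3 : ∀ s t R S, E R s t → ∃ u, E S t u)
    (hperf : ∀ w s t, LPath E w a s → ∀ p ∈ P, (LPath E p.1 s t ↔ LPath E p.2 s t))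
    (s : V) (w v : List α) (hw : LPath E w a s) (hwv : ThueEq P w v) :
    LPath E v a s :=
  perfect_path_congr_general P E a hperf s w v hw hwv
end

section
/- The canonical structure 𝔻 is a perfect structure: for every word w ∈ 𝔄*, all vertices s, t of 𝔻 with a →^w s, and every pair [l_i, r_i] ∈ Π, the path relation s →^{l_i} t holds if and only if s →^{r_i} t holds. -/
def thueSetoid {α : Type} (P : List (List α × List α)) : Setoid (List α) :=
  ⟨ThueEq P, Relation.EqvGen.is_equivalence _⟩

/-- Vertices of the canonical structure 𝔻 : equivalence classes of words. -/
def DVert {α : Type} (P : List (List α × List α)) : Type := Quotient (thueSetoid P)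

/-- Edges of 𝔻 : `R([w],[v])` iff `wR ≃_Π v`. -/
def DEdge {α : Type} (P : List (List α × List α)) (R : α) (s t : DVert P) : Prop :=
  ∃ w v, s = Quotient.mk (thueSetoid P) w ∧ t = Quotient.mk (thueSetoid P) v ∧
    ThueEq P (w ++ [R]) v

/-- The unary predicate of 𝔻 : `A([w])` iff `w ≃_Π ε`. -/
def DA {α : Type} (P : List (List α × List α)) (s : DVert P) : Prop :=
  ∃ w, s = Quotient.mk (thueSetoid P) w ∧ ThueEq P w []

/-! In `𝔻` the edge labelled `R` from `[x]` leads exactly to `[x R]`, so a path labelled `u` from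
`[x]` ends exactly at `[x u]`. Hence `s = [w]`, and `[w] →^{lᵢ} t` and `[w] →^{rᵢ} t` both say
`t = [w lᵢ] = [w rᵢ]`. -/

section

variable {α : Type} {P : List (List α × List α)}

theorem ThueEq.append_right {a b : List α} (h : ThueEq P a b) (u : List α) : ThueEq P (a ++ u) (b ++ u) := by
  induction h with
  | rel x y hxy =>
    obtain ⟨x', y', p, hp, rfl, rfl⟩ := hxy
    exact Relation.EqvGen.rel _ _ ⟨x', y' ++ u, p, hp, by simp, by simp⟩
  | refl x => exact Relation.EqvGen.refl _
  | symm x y _ ih => exact Relation.EqvGen.symm _ _ ih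
  | trans x y z _ _ ih₁ ih₂ => exact Relation.EqvGen.trans _ _ _ ih₁ ih₂

theorem ThueEq.append_of_mem {p : List α × List α} (hp : p ∈ P) (w : List α) : ThueEq P (w ++ p.1) (w ++ p.2) :=
  Relation.EqvGen.rel _ _ ⟨w, [], p, hp, by simp, by simp⟩

theorem dEdge_mk_iff {R : α} {x : List α} {t : DVert P} :
    DEdge P R (Quotient.mk (thueSetoid P) x) t ↔ t = Quotient.mk (thueSetoid P) (x ++ [R]) := by
  constructor
  · rintro ⟨w, v, hxw, rfl, hwv⟩
    have hxw : ThueEq P x w := Quotient.exact hxw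
    exact Quotient.sound (Relation.EqvGen.symm _ _
      (Relation.EqvGen.trans _ _ _ (hxw.append_right [R]) hwv))
  · rintro rfl
    exact ⟨x, x ++ [R], rfl, rfl, Relation.EqvGen.refl _⟩

theorem lPath_mk_iff {u x : List α} {t : DVert P} :
    LPath (DEdge P) u (Quotient.mk (thueSetoid P) x) t ↔
      t = Quotient.mk (thueSetoid P) (x ++ u) := by
  induction u generalizing x with
  | nil => simpa only [LPath, List.append_nil] using eq_comm
  | cons R u ih =>
    have hxR : x ++ R :: u = x ++ [R] ++ u := by simp
    simp only [LPath, dEdge_mk_iff, hxR]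
    exact ⟨fun ⟨_, rfl, h⟩ => ih.mp h, fun h => ⟨_, rfl, ih.mpr h⟩⟩
end

theorem canonical_is_perfect_general {α : Type} (P : List (List α × List α))
    (w : List α) (s t : DVert P)
    (hs : LPath (DEdge P) w (Quotient.mk (thueSetoid P) []) s) :
    ∀ p ∈ P, (LPath (DEdge P) p.1 s t ↔ LPath (DEdge P) p.2 s t) := by
  intro p hp
  obtain rfl : s = Quotient.mk (thueSetoid P) w := lPath_mk_iff.mp hs
  rw [lPath_mk_iff, lPath_mk_iff, Quotient.sound (ThueEq.append_of_mem hp w)]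

theorem canonical_is_perfect {α : Type} [Fintype α] (P : List (List α × List α))
    (w : List α) (s t : DVert P)
    (hs : LPath (DEdge P) w (Quotient.mk (thueSetoid P) []) s) :
    ∀ p ∈ P, (LPath (DEdge P) p.1 s t ↔ LPath (DEdge P) p.2 s t) :=
  canonical_is_perfect_general P w s t hs
end

section
/- If the instance 𝕋 = [l, r, Π] is negative (i.e., l ≄_Π r), then the canonical structure 𝔻 does not satisfy the diamond query: there is no vertex s of 𝔻 with A(s) and no vertex t such that both s →^l t and s →^r t. -/
/-! Both paths start at the class of a word `w ≃ ε`, and a path labelled `u` from `[w]` can only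
end at `[wu]`; so the common endpoint gives `l ≃ wl ≃ wr ≃ r`. -/

namespace ThueEq

variable {α : Type} {P : List (List α × List α)} {u v w : List α}

protected theorem symm (h : ThueEq P u v) : ThueEq P v u := Relation.EqvGen.symm _ _ h

protected theorem trans (h₁ : ThueEq P u v) (h₂ : ThueEq P v w) : ThueEq P u w :=
  Relation.EqvGen.trans _ _ _ h₁ h₂

theorem append_append (h : ThueEq P u v) (x y : List α) :
    ThueEq P (x ++ u ++ y) (x ++ v ++ y) := by
  induction h with
  | rel a b hab =>
    obtain ⟨c, d, p, hp, rfl, rfl⟩ := hab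
    exact .rel _ _ ⟨x ++ c, d ++ y, p, hp, by simp, by simp⟩
  | refl => exact .refl _
  | symm _ _ _ ih => exact ih.symm
  | trans _ _ _ _ _ ih₁ ih₂ => exact ih₁.trans ih₂

theorem append_right_s8 (h : ThueEq P u v) (y : List α) : ThueEq P (u ++ y) (v ++ y) := by
  simpa using h.append_append [] y

theorem append_left_of_nil (h : ThueEq P u []) (y : List α) : ThueEq P (u ++ y) y := by
  simpa using h.append_right_s8 y

end ThueEq

theorem eq_mk_append_of_lPath_dEdge {α : Type} {P : List (List α × List α)} (u w : List α)
    (t : DVert P) (h : LPath (DEdge P) u (Quotient.mk _ w) t) : t = Quotient.mk _ (w ++ u) := by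
  induction u generalizing w with
  | nil => simpa [LPath] using h.symm
  | cons R u ih =>
    obtain ⟨_, ⟨w', v, hw, rfl, hv⟩, hpath⟩ := h
    have hwR : ThueEq P (w ++ [R]) v := ((Quotient.exact hw).append_right_s8 [R]).trans hv
    rw [ih v hpath]
    have hvw : ThueEq P (v ++ u) (w ++ R :: u) := by simpa using (hwR.append_right_s8 u).symm
    exact Quotient.sound hvw

theorem canonical_no_diamond_of_negative_general {α : Type}
    (P : List (List α × List α)) (l r : List α)
    (hneg : ¬ ThueEq P l r) :
    ¬ ∃ s : DVert P, DA P s ∧ ∃ t, LPath (DEdge P) l s t ∧ LPath (DEdge P) r s t := by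
  rintro ⟨_, ⟨w, rfl, hw⟩, t, hpl, hpr⟩
  have hwlr : ThueEq P (w ++ l) (w ++ r) :=
    Quotient.exact ((eq_mk_append_of_lPath_dEdge l w t hpl).symm.trans
      (eq_mk_append_of_lPath_dEdge r w t hpr))
  exact hneg (((hw.append_left_of_nil l).symm.trans hwlr).trans (hw.append_left_of_nil r))

theorem canonical_no_diamond_of_negative {α : Type} [Fintype α]
    (P : List (List α × List α)) (l r : List α)
    (hl : l ≠ []) (hr : r ≠ []) (hP : ∀ p ∈ P, p.1 ≠ [] ∧ p.2 ≠ [])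
    (hneg : ¬ ThueEq P l r) :
    ¬ ∃ s : DVert P, DA P s ∧ ∃ t, LPath (DEdge P) l s t ∧ LPath (DEdge P) r s t :=
  canonical_no_diamond_of_negative_general P l r hneg
end

section
/- If the instance 𝕋 = [l, r, Π] is positive (l ≃_Π r) and D is a perfect structure, then there exists a vertex s of D such that a →^l s and a →^r s; in particular D satisfies the diamond query ∃x ∃y (A(x) ∧ x →^l y ∧ x →^r y). -/
/-! Perfection lets us replace `lᵢ` by `rᵢ` inside any path from `a`, so paths from `a` labelled
by `≃_Π`-equivalent words have the same endpoints. Since every edge can be continued, some path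
labelled `l` leaves `a`; its endpoint is then also reached along `r`. -/

namespace LPath

variable {α V : Type} {E : α → V → V → Prop}

theorem append_iff_s9 {u v : List α} {s t : V} :
    LPath E (u ++ v) s t ↔ ∃ m, LPath E u s m ∧ LPath E v m t := by
  induction u generalizing s with
  | nil => exact ⟨fun h => ⟨s, rfl, h⟩, fun ⟨_, hsm, h⟩ => hsm ▸ h⟩
  | cons R u ih =>
    simp only [List.cons_append, LPath, ih]
    constructor
    · rintro ⟨w, hE, m, hu, hv⟩
      exact ⟨m, ⟨w, hE, hu⟩, hv⟩
    · rintro ⟨m, ⟨w, hE, hu⟩, hv⟩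
      exact ⟨w, hE, m, hu, hv⟩

theorem exists_of_forall_exists_edge
    (hE : ∀ s t R S, E R s t → ∃ u, E S t u) :
    ∀ (w : List α) {s : V}, (∀ S, ∃ t, E S s t) → ∃ t, LPath E w s t
  | [], s, _ => ⟨s, rfl⟩
  | R :: w, s, hs => by
    obtain ⟨t, hst⟩ := hs R
    obtain ⟨u, htu⟩ := exists_of_forall_exists_edge hE w (fun S => hE s t R S hst)
    exact ⟨u, t, hst, htu⟩

end LPath

theorem ThueEq.lpath_iff {α V : Type} {P : List (List α × List α)} {E : α → V → V → Prop} {a : V}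
    (hperf : ∀ w s t, LPath E w a s → ∀ p ∈ P, (LPath E p.1 s t ↔ LPath E p.2 s t))
    {u v : List α} (h : ThueEq P u v) (t : V) :
    LPath E u a t ↔ LPath E v a t := by
  induction h generalizing t with
  | rel u v huv =>
    obtain ⟨x, y, p, hp, rfl, rfl⟩ := huv
    simp only [List.append_assoc, LPath.append_iff_s9]
    exact exists_congr fun m => and_congr_right fun hx => exists_congr fun _ =>
      and_congr_left' (hperf x m _ hx p hp)
  | refl => rfl
  | symm _ _ _ ih => exact (ih t).symm
  | trans _ _ _ _ _ ih₁ ih₂ => exact (ih₁ t).trans (ih₂ t)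

theorem perfect_diamond_of_positive_general {α V : Type}
    (P : List (List α × List α)) (l r : List α)
    (E : α → V → V → Prop) (Ap : V → Prop) (a : V)
    (p1 : Ap a)
    (p2 : ∀ s, Ap s → ∀ S, ∃ t, E S s t)
    (p3 : ∀ s t R S, E R s t → ∃ u, E S t u)
    (hperf : ∀ w s t, LPath E w a s → ∀ p ∈ P, (LPath E p.1 s t ↔ LPath E p.2 s t))
    (hpos : ThueEq P l r) :
    (∃ s, LPath E l a s ∧ LPath E r a s) ∧
    (∃ x y, Ap x ∧ LPath E l x y ∧ LPath E r x y) := by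
  obtain ⟨s, hl⟩ := LPath.exists_of_forall_exists_edge p3 l (p2 a p1)
  have hr : LPath E r a s := (hpos.lpath_iff hperf s).mp hl
  exact ⟨⟨s, hl, hr⟩, ⟨a, s, p1, hl, hr⟩⟩

theorem perfect_diamond_of_positive {α V : Type} [Fintype α]
    (P : List (List α × List α)) (l r : List α)
    (hl : l ≠ []) (hr : r ≠ []) (hP : ∀ p ∈ P, p.1 ≠ [] ∧ p.2 ≠ [])
    (E : α → V → V → Prop) (Ap : V → Prop) (a : V)
    (p1 : Ap a)
    (p2 : ∀ s, Ap s → ∀ S, ∃ t, E S s t)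
    (p3 : ∀ s t R S, E R s t → ∃ u, E S t u)
    (hperf : ∀ w s t, LPath E w a s → ∀ p ∈ P, (LPath E p.1 s t ↔ LPath E p.2 s t))
    (hpos : ThueEq P l r) :
    (∃ s, LPath E l a s ∧ LPath E r a s) ∧
    (∃ x y, Ap x ∧ LPath E l x y ∧ LPath E r x y) :=
  perfect_diamond_of_positive_general P l r E Ap a p1 p2 p3 hperf hpos
end
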